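/- Let H be a Hopf quasigroup over a field k with antipode λ, let B be a right H-comodule magma and h: H → B a total integral. Writing q_B(b) = b_(0) · h(λ(b_(1))), the coaction of the image of q_B is trivial: ρ_B(q_B(b)) = q_B(b) ⊗ 1_H for all b ∈ B. -/

import Mathlib

open TensorProduct

noncomputable section

namespace DoiHopf

variable (k : Type) [Field k]
variable (H : Type) [AddCommGroup H] [Module k H]

/-- A Hopf quasigroup structure on `H`: a unital (not necessarily associative) magma and a
coassociative counital comonoid such that `eps` and `delta` are morphisms of unital magmas,
with an antipode `lam` satisfying the four Hopf quasigroup antipode identities. -/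
structure IsHopfQuasigroup (mul : H ⊗[k] H →ₗ[k] H) (one : H)
    (eps : H →ₗ[k] k) (delta : H →ₗ[k] H ⊗[k] H) (lam : H →ₗ[k] H) : Prop where
  one_mul : ∀ x, mul (one ⊗ₜ[k] x) = x
  mul_one : ∀ x, mul (x ⊗ₜ[k] one) = x
  coassoc : (TensorProduct.assoc k H H H).toLinearMap ∘ₗ delta.rTensor H ∘ₗ delta
      = delta.lTensor H ∘ₗ delta
  counit_left : ∀ x, (TensorProduct.lid k H) ((eps.rTensor H) (delta x)) = x
  counit_right : ∀ x, (TensorProduct.rid k H) ((eps.lTensor H) (delta x)) = x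
  eps_mul : ∀ x y, eps (mul (x ⊗ₜ[k] y)) = eps x * eps y
  eps_one : eps one = 1
  delta_mul : delta ∘ₗ mul = (TensorProduct.map mul mul)
      ∘ₗ (TensorProduct.tensorTensorTensorComm k H H H H).toLinearMap
      ∘ₗ (TensorProduct.map delta delta)
  delta_one : delta one = one ⊗ₜ[k] one
  antipode_left₁ : mul ∘ₗ (TensorProduct.map lam mul)
      ∘ₗ (TensorProduct.assoc k H H H).toLinearMap ∘ₗ delta.rTensor H
      = (TensorProduct.lid k H).toLinearMap ∘ₗ eps.rTensor H
  antipode_left₂ : mul ∘ₗ (TensorProduct.map (LinearMap.id : H →ₗ[k] H) (mul ∘ₗ lam.rTensor H))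
      ∘ₗ (TensorProduct.assoc k H H H).toLinearMap ∘ₗ delta.rTensor H
      = (TensorProduct.lid k H).toLinearMap ∘ₗ eps.rTensor H
  antipode_right₁ : mul ∘ₗ (TensorProduct.map mul lam)
      ∘ₗ (TensorProduct.assoc k H H H).symm.toLinearMap ∘ₗ delta.lTensor H
      = (TensorProduct.rid k H).toLinearMap ∘ₗ eps.lTensor H
  antipode_right₂ : mul ∘ₗ (TensorProduct.map (mul ∘ₗ lam.lTensor H) (LinearMap.id : H →ₗ[k] H))
      ∘ₗ (TensorProduct.assoc k H H H).symm.toLinearMap ∘ₗ delta.lTensor H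
      = (TensorProduct.rid k H).toLinearMap ∘ₗ eps.lTensor H

/-- A right `H`-comodule magma structure on `B`: a unital magma which is a right `H`-comodule
whose coaction is multiplicative for the tensor product magma structure on `B ⊗ H` and
sends the unit to `1_B ⊗ 1_H`. -/
structure IsComoduleMagma (mul : H ⊗[k] H →ₗ[k] H) (one : H)
    (eps : H →ₗ[k] k) (delta : H →ₗ[k] H ⊗[k] H)
    {B : Type} [AddCommGroup B] [Module k B]
    (mulB : B ⊗[k] B →ₗ[k] B) (oneB : B) (rho : B →ₗ[k] B ⊗[k] H) : Prop where
  oneB_mul : ∀ b, mulB (oneB ⊗ₜ[k] b) = b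
  mul_oneB : ∀ b, mulB (b ⊗ₜ[k] oneB) = b
  counit : ∀ b, (TensorProduct.rid k B) ((eps.lTensor B) (rho b)) = b
  coassoc : rho.rTensor H ∘ₗ rho
      = (TensorProduct.assoc k B H H).symm.toLinearMap ∘ₗ delta.lTensor B ∘ₗ rho
  mul_compat : rho ∘ₗ mulB = (TensorProduct.map mulB mul)
      ∘ₗ (TensorProduct.tensorTensorTensorComm k B H B H).toLinearMap
      ∘ₗ (TensorProduct.map rho rho)
  one_compat : rho oneB = oneB ⊗ₜ[k] one

/-- The generic "action against `f : H → B'` after the coaction" endomorphism; for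
`f = h ∘ λ` this is the canonical idempotent `q` of the paper. -/
def act {M B' : Type} [AddCommGroup M] [Module k M] [AddCommGroup B'] [Module k B']
    (phi : M ⊗[k] B' →ₗ[k] M) (rho : M →ₗ[k] M ⊗[k] H) (f : H →ₗ[k] B') : M →ₗ[k] M :=
  phi ∘ₗ f.lTensor M ∘ₗ rho

variable (B : Type) [AddCommGroup B] [Module k B]
variable (mul : H ⊗[k] H →ₗ[k] H) (one : H) (eps : H →ₗ[k] k)
variable (delta : H →ₗ[k] H ⊗[k] H) (lam : H →ₗ[k] H)
variable (mulB : B ⊗[k] B →ₗ[k] B) (oneB : B) (rho : B →ₗ[k] B ⊗[k] H)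
variable (h : H →ₗ[k] B)

/-! Applying `ρ` to `q(b) = b₍₀₎ h(λ b₍₁₎)` and using that `ρ` is multiplicative, that `h` is
colinear and that `ρ` is coassociative gives
`ρ(q b) = b₍₀₎ h(λ(b₍₂₎)₍₁₎) ⊗ b₍₁₎ λ(b₍₂₎)₍₂₎`, so everything reduces to the identity
`λ(c₂)₍₁₎ ⊗ c₁ λ(c₂)₍₂₎ = λ(c) ⊗ 1` in `H`. To prove it, insert
`ε(c₁) a = λ(c₁₁)(c₁₂ a)` (a left antipode axiom) and regroup by coassociativity into
`λ(c₁) (c₂ λ(c₄)₍₁₎) ⊗ c₃ λ(c₄)₍₂₎`; since `Δ` is multiplicative, the second and third legs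
combine to `Δ(c₂ λ(c₃)) = ε(c₂) 1 ⊗ 1` (a right antipode axiom). No associativity of `H` is
needed anywhere. -/

section HopfQuasigroup

variable {k H}
variable {mul : H ⊗[k] H →ₗ[k] H} {one : H} {eps : H →ₗ[k] k}
variable {delta : H →ₗ[k] H ⊗[k] H} {lam : H →ₗ[k] H}

open TensorProduct LinearMap

variable (mul delta lam) in
/-- `(m ⊗ n) ⊗ z ↦ (m ⊗ n) · Δ(λ z)`, computed in the tensor product magma `H ⊗ H`. -/
def mulComulAntipode : (H ⊗[k] H) ⊗[k] H →ₗ[k] H ⊗[k] H :=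
  map mul mul ∘ₗ (tensorTensorTensorComm k H H H H).toLinearMap
    ∘ₗ (delta ∘ₗ lam).lTensor (H ⊗[k] H)

variable (mul delta lam) in
/-- `a ⊗ b ↦ λ(b)₍₁₎ ⊗ a · λ(b)₍₂₎`. -/
def twist : H ⊗[k] H →ₗ[k] H ⊗[k] H :=
  mul.lTensor H ∘ₗ (TensorProduct.leftComm k H H H).toLinearMap ∘ₗ (delta ∘ₗ lam).lTensor H

variable (mul lam) in
/-- `x ⊗ (u ⊗ v) ↦ λ(x) · u ⊗ v`. -/
def antipodeMulLeft : H ⊗[k] (H ⊗[k] H) →ₗ[k] H ⊗[k] H :=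
  mul.rTensor H ∘ₗ (TensorProduct.assoc k H H H).symm.toLinearMap ∘ₗ lam.rTensor (H ⊗[k] H)

variable (mul lam) in
/-- `(x ⊗ y) ⊗ z ↦ λ(x) · (y · z)`. -/
def antipodeMulMul : (H ⊗[k] H) ⊗[k] H →ₗ[k] H :=
  mul ∘ₗ map lam mul ∘ₗ (TensorProduct.assoc k H H H).toLinearMap

theorem antipodeMulLeft_lTensor_mulComulAntipode (v : H ⊗[k] H) (y z : H) :
    antipodeMulLeft mul lam ((mulComulAntipode mul delta lam).lTensor H
        (TensorProduct.assoc k H (H ⊗[k] H) H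
          (TensorProduct.assoc k H H H (v ⊗ₜ y) ⊗ₜ z)))
      = (antipodeMulMul mul lam).rTensor H
          ((TensorProduct.assoc k (H ⊗[k] H) H H).symm (v ⊗ₜ twist mul delta lam (y ⊗ₜ z))) := by
  induction v using TensorProduct.induction_on with
  | zero => simp
  | tmul a b =>
    simp only [twist, mulComulAntipode, comp_apply, lTensor_tmul,
      LinearEquiv.coe_coe, TensorProduct.assoc_tmul]
    induction delta (lam z) using TensorProduct.induction_on with
    | zero => simp
    | tmul u₁ u₂ => simp [antipodeMulLeft, antipodeMulMul]
    | add u w hu hw => simp only [tmul_add, map_add, hu, hw]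
  | add v w hv hw => simp only [add_tmul, map_add, hv, hw]

namespace IsHopfQuasigroup

variable (hH : IsHopfQuasigroup k H mul one eps delta lam)
include hH

theorem rTensor_comul_comp_comul :
    delta.rTensor H ∘ₗ delta
      = (TensorProduct.assoc k H H H).symm.toLinearMap ∘ₗ delta.lTensor H ∘ₗ delta := by
  rw [← hH.coassoc]
  ext x
  simp

theorem rTensor_counit_rTensor_comul_comul (c : H) :
    ((TensorProduct.lid k H).toLinearMap ∘ₗ eps.rTensor H).rTensor H
      (delta.rTensor H (delta c)) = delta c := by
  rw [← rTensor_comp_apply, show ((TensorProduct.lid k H).toLinearMap ∘ₗ eps.rTensor H) ∘ₗ delta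
    = LinearMap.id from LinearMap.ext hH.counit_left, rTensor_id, id_apply]

theorem mul_lTensor_antipode_comul (x : H) : mul (lam.lTensor H (delta x)) = eps x • one := by
  have := LinearMap.congr_fun hH.antipode_right₁ (one ⊗ₜ x)
  simp only [comp_apply, lTensor_tmul, LinearEquiv.coe_coe, TensorProduct.rid_tmul] at this
  rw [← this]
  congr 1
  induction delta x using TensorProduct.induction_on with
  | zero => simp
  | tmul a b => simp [hH.one_mul]
  | add u v hu hv => simp only [tmul_add, map_add, hu, hv]

theorem rTensor_antipodeMulMul_comul_tmul (x : H) (w : H ⊗[k] H) :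
    (antipodeMulMul mul lam).rTensor H ((TensorProduct.assoc k (H ⊗[k] H) H H).symm
      (delta x ⊗ₜ w)) = eps x • w := by
  induction w using TensorProduct.induction_on with
  | zero => simp
  | tmul u v =>
    rw [TensorProduct.assoc_symm_tmul, rTensor_tmul, smul_tmul']
    congr 1
    simpa [antipodeMulMul] using LinearMap.congr_fun hH.antipode_left₁ (x ⊗ₜ u)
  | add u v hu hv => simp only [tmul_add, map_add, hu, hv, smul_add]

theorem twist_comp_rTensor_counit :
    twist mul delta lam ∘ₗ ((TensorProduct.lid k H).toLinearMap ∘ₗ eps.rTensor H).rTensor H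
      = antipodeMulLeft mul lam ∘ₗ (mulComulAntipode mul delta lam).lTensor H
        ∘ₗ (TensorProduct.assoc k H (H ⊗[k] H) H).toLinearMap
        ∘ₗ (TensorProduct.assoc k H H H).toLinearMap.rTensor H ∘ₗ (delta.rTensor H).rTensor H := by
  ext x y z
  simp only [AlgebraTensorModule.curry_apply, curry_apply, LinearMap.coe_restrictScalars,
    comp_apply, rTensor_tmul, LinearEquiv.coe_coe, TensorProduct.lid_tmul]
  rw [antipodeMulLeft_lTensor_mulComulAntipode, hH.rTensor_antipodeMulMul_comul_tmul,
    ← smul_tmul', map_smul]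

theorem mulComulAntipode_comp_rTensor_comul :
    mulComulAntipode mul delta lam ∘ₗ delta.rTensor H = delta ∘ₗ mul ∘ₗ lam.lTensor H := by
  ext x y
  simpa [mulComulAntipode] using (LinearMap.congr_fun hH.delta_mul (x ⊗ₜ lam y)).symm

theorem mulComulAntipode_comp_comul_comul :
    mulComulAntipode mul delta lam ∘ₗ delta.rTensor H ∘ₗ delta = eps.smulRight (one ⊗ₜ one) := by
  ext c
  rw [← comp_assoc, hH.mulComulAntipode_comp_rTensor_comul, comp_apply, comp_apply, comp_apply,
    hH.mul_lTensor_antipode_comul, map_smul, hH.delta_one, smulRight_apply]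

theorem reassoc_comp_comul_comul_comul :
    (TensorProduct.assoc k H (H ⊗[k] H) H).toLinearMap
        ∘ₗ (TensorProduct.assoc k H H H).toLinearMap.rTensor H
        ∘ₗ (delta.rTensor H).rTensor H ∘ₗ delta.rTensor H ∘ₗ delta
      = (delta.rTensor H ∘ₗ delta).lTensor H ∘ₗ delta := by
  have natural : (TensorProduct.assoc k H (H ⊗[k] H) H).toLinearMap
        ∘ₗ (TensorProduct.assoc k H H H).toLinearMap.rTensor H
        ∘ₗ ((TensorProduct.assoc k H H H).symm.toLinearMap ∘ₗ delta.lTensor H).rTensor H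
        ∘ₗ (TensorProduct.assoc k H H H).symm.toLinearMap
      = (delta.rTensor H).lTensor H := by
    ext x y z
    simp
  have twice : (delta.rTensor H).rTensor H ∘ₗ delta.rTensor H ∘ₗ delta
      = ((TensorProduct.assoc k H H H).symm.toLinearMap ∘ₗ delta.lTensor H).rTensor H
        ∘ₗ (TensorProduct.assoc k H H H).symm.toLinearMap ∘ₗ delta.lTensor H ∘ₗ delta := by
    rw [← comp_assoc, ← rTensor_comp, hH.rTensor_comul_comp_comul, ← comp_assoc, rTensor_comp,
      comp_assoc, hH.rTensor_comul_comp_comul, comp_assoc]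
  rw [twice, lTensor_comp, ← natural]
  rfl

theorem antipodeMulLeft_lTensor_counit_comul (c : H) :
    antipodeMulLeft mul lam ((eps.smulRight (one ⊗ₜ one)).lTensor H (delta c)) = lam c ⊗ₜ one := by
  have factor : antipodeMulLeft mul lam ∘ₗ (eps.smulRight (one ⊗ₜ one)).lTensor H
      = (TensorProduct.mk k H H).flip one ∘ₗ lam ∘ₗ (TensorProduct.rid k H).toLinearMap
        ∘ₗ eps.lTensor H := by
    ext x y
    simp [antipodeMulLeft, hH.mul_one, smul_tmul']
  rw [← comp_apply (f := antipodeMulLeft mul lam), factor]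
  simp only [comp_apply, LinearEquiv.coe_coe, hH.counit_right, flip_apply, mk_apply]

theorem twist_comp_comul : twist mul delta lam ∘ₗ delta = (TensorProduct.mk k H H).flip one ∘ₗ lam := by
  ext c
  calc twist mul delta lam (delta c)
      = twist mul delta lam (((TensorProduct.lid k H).toLinearMap ∘ₗ eps.rTensor H).rTensor H
          (delta.rTensor H (delta c))) := by rw [hH.rTensor_counit_rTensor_comul_comul]
    _ = antipodeMulLeft mul lam ((mulComulAntipode mul delta lam).lTensor H
          (((TensorProduct.assoc k H (H ⊗[k] H) H).toLinearMap
            ∘ₗ (TensorProduct.assoc k H H H).toLinearMap.rTensor H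
            ∘ₗ (delta.rTensor H).rTensor H ∘ₗ delta.rTensor H ∘ₗ delta) c)) :=
        LinearMap.congr_fun hH.twist_comp_rTensor_counit _
    _ = antipodeMulLeft mul lam ((eps.smulRight (one ⊗ₜ one)).lTensor H (delta c)) := by
        rw [hH.reassoc_comp_comul_comul_comul, comp_apply, ← lTensor_comp_apply,
          hH.mulComulAntipode_comp_comul_comul]
    _ = lam c ⊗ₜ one := hH.antipodeMulLeft_lTensor_counit_comul c

end IsHopfQuasigroup

end HopfQuasigroup

section ComoduleMagma

variable {k H B}
variable {mul : H ⊗[k] H →ₗ[k] H} {one : H} {eps : H →ₗ[k] k}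
variable {delta : H →ₗ[k] H ⊗[k] H} {lam : H →ₗ[k] H}
variable {mulB : B ⊗[k] B →ₗ[k] B} {oneB : B} {rho : B →ₗ[k] B ⊗[k] H} {h : H →ₗ[k] B}

open TensorProduct LinearMap

theorem map_mul_tensorTensorTensorComm_lTensor_eq_twist (p : B) (w : H ⊗[k] H) :
    map mulB mul (tensorTensorTensorComm k B H B H
        ((h.rTensor H ∘ₗ delta ∘ₗ lam).lTensor (B ⊗[k] H)
          ((TensorProduct.assoc k B H H).symm (p ⊗ₜ w))))
      = (mulB ∘ₗ h.lTensor B).rTensor H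
          ((TensorProduct.assoc k B H H).symm (p ⊗ₜ twist mul delta lam w)) := by
  induction w using TensorProduct.induction_on with
  | zero => simp
  | tmul x y =>
    simp only [twist, comp_apply, LinearEquiv.coe_coe, TensorProduct.assoc_symm_tmul,
      lTensor_tmul]
    induction delta (lam y) using TensorProduct.induction_on with
    | zero => simp
    | tmul u₁ u₂ => simp
    | add u v hu hv => simp only [tmul_add, map_add, hu, hv]
  | add v w hv hw => simp only [tmul_add, map_add, hv, hw]

theorem IsComoduleMagma.coaction_act
    (hB : IsComoduleMagma k H mul one eps delta mulB oneB rho)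
    (hcomod : rho ∘ₗ h = h.rTensor H ∘ₗ delta) (b : B) :
    rho (act k H mulB rho (h ∘ₗ lam) b)
      = (mulB ∘ₗ h.lTensor B).rTensor H ((TensorProduct.assoc k B H H).symm
          ((twist mul delta lam).lTensor B (delta.lTensor B (rho b)))) := by
  have coaction_h : map rho rho ∘ₗ (h ∘ₗ lam).lTensor B
      = (h.rTensor H ∘ₗ delta ∘ₗ lam).lTensor (B ⊗[k] H) ∘ₗ rho.rTensor H := by
    rw [← comp_assoc, ← hcomod, lTensor_comp_rTensor, map_comp_lTensor, comp_assoc]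
  calc rho (act k H mulB rho (h ∘ₗ lam) b)
      = map mulB mul (tensorTensorTensorComm k B H B H
          (map rho rho ((h ∘ₗ lam).lTensor B (rho b)))) :=
        LinearMap.congr_fun hB.mul_compat _
    _ = map mulB mul (tensorTensorTensorComm k B H B H
          ((h.rTensor H ∘ₗ delta ∘ₗ lam).lTensor (B ⊗[k] H)
            ((TensorProduct.assoc k B H H).symm (delta.lTensor B (rho b))))) := by
        rw [← comp_apply (f := map rho rho), coaction_h, comp_apply,
          ← comp_apply (f := rho.rTensor H), hB.coassoc]
        rfl
    _ = _ := by
        induction delta.lTensor B (rho b) using TensorProduct.induction_on with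
        | zero => simp
        | tmul p w => exact map_mul_tensorTensorTensorComm_lTensor_eq_twist p w
        | add v w hv hw => simp only [map_add, hv, hw]

end ComoduleMagma

theorem rho_qB_trivial
    (hH : IsHopfQuasigroup k H mul one eps delta lam)
    (hB : IsComoduleMagma k H mul one eps delta mulB oneB rho)
    (hcomod : rho ∘ₗ h = h.rTensor H ∘ₗ delta) :
    ∀ b : B, rho (act k H mulB rho (h ∘ₗ lam) b)
      = act k H mulB rho (h ∘ₗ lam) b ⊗ₜ[k] one := by
  intro b
  rw [hB.coaction_act hcomod, ← LinearMap.lTensor_comp_apply, hH.twist_comp_comul]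
  change _ = mulB ((h ∘ₗ lam).lTensor B (rho b)) ⊗ₜ one
  induction rho b using TensorProduct.induction_on with
  | zero => simp
  | tmul p c => simp
  | add v w hv hw => simp only [map_add, hv, hw, add_tmul]
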